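/- arXiv:1611.07441 — 7 statements merged into one kernel-verified Lean document; each statement's English description precedes it below -/
import Mathlib

section
/- Let γ₁, γ₂, γ₃, γ₄ : [t0,t1] → ℝ² be continuously differentiable curves, and suppose there exist C¹ functions x, y, a, b : [t0,t1] → ℝ with γ₁(t) = (x(t), y(t)), γ₂(t) = (x(t)+a(t), y(t)+b(t)), γ₃(t) = (x(t)+a(t)−b(t), y(t)+a(t)+b(t)), γ₄(t) = (x(t)−b(t), y(t)+a(t)) for all t. Then ∫_{γ₁} y dx − ∫_{γ₂} y dx + ∫_{γ₃} y dx − ∫_{γ₄} y dx = (a(t1)² − b(t1)²)/2 − (a(t0)² − b(t0)²)/2. -/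
/-!
Write `x', a', b'` for the derivatives of the parameters. In the alternating sum of the four
integrands `y x'`, `(y + b)(x' + a')`, `(y + a + b)(x' + a' - b')`, `(y + a)(x' - b')` every term
containing `x'` or `y` cancels, leaving `a a' - b b'`, the derivative of `(a² - b²) / 2`; the
fundamental theorem of calculus finishes the proof.
-/

open Set intervalIntegral

theorem integral_snd_mul_derivWithin_fst_congr {γ : ℝ → ℝ × ℝ} {X Y : ℝ → ℝ} {t0 t1 : ℝ}
    (ht : t0 ≤ t1) (h : ∀ t ∈ Icc t0 t1, γ t = (X t, Y t)) :
    ∫ t in t0..t1, (γ t).2 * derivWithin (fun s => (γ s).1) (Icc t0 t1) t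
      = ∫ t in t0..t1, Y t * derivWithin X (Icc t0 t1) t := by
  refine integral_congr fun t ht' => ?_
  rw [uIcc_of_le ht] at ht'
  rw [derivWithin_congr (fun s hs => by rw [h s hs]) (by rw [h t ht']), h t ht']

theorem intervalIntegrable_mul_derivWithin_Icc {X Y : ℝ → ℝ} {t0 t1 : ℝ} (ht : t0 ≤ t1)
    (hX : ContDiffOn ℝ 1 X (Icc t0 t1)) (hY : ContinuousOn Y (Icc t0 t1)) :
    IntervalIntegrable (fun t => Y t * derivWithin X (Icc t0 t1) t) MeasureTheory.volume t0 t1 := by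
  rcases ht.eq_or_lt with rfl | hlt
  · exact IntervalIntegrable.refl
  · have hX' := hX.continuousOn_derivWithin (uniqueDiffOn_Icc hlt) le_rfl
    exact (hY.mul hX').intervalIntegrable_of_Icc ht

theorem square_vertices_area_integrand_eq_derivWithin {x y a b : ℝ → ℝ} {s : Set ℝ} {t : ℝ}
    (hx : DifferentiableWithinAt ℝ x s t) (ha : DifferentiableWithinAt ℝ a s t)
    (hb : DifferentiableWithinAt ℝ b s t) :
    y t * derivWithin x s t - (y t + b t) * derivWithin (fun s => x s + a s) s t
      + (y t + a t + b t) * derivWithin (fun s => x s + a s - b s) s t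
      - (y t + a t) * derivWithin (fun s => x s - b s) s t
      = derivWithin (fun s => (a s ^ 2 - b s ^ 2) / 2) s t := by
  rw [derivWithin_fun_add hx ha, derivWithin_fun_sub (hx.fun_add ha) hb, derivWithin_fun_add hx ha,
    derivWithin_fun_sub hx hb, derivWithin_div_const,
    derivWithin_fun_sub (ha.fun_pow 2) (hb.fun_pow 2), derivWithin_fun_pow ha, derivWithin_fun_pow hb]
  ring

theorem stmt1_general (t0 t1 : ℝ) (ht : t0 ≤ t1)
    (γ₁ γ₂ γ₃ γ₄ : ℝ → ℝ × ℝ) (x y a b : ℝ → ℝ)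
    (hx : ContDiffOn ℝ 1 x (Set.Icc t0 t1))
    (hy : ContDiffOn ℝ 1 y (Set.Icc t0 t1))
    (ha : ContDiffOn ℝ 1 a (Set.Icc t0 t1))
    (hb : ContDiffOn ℝ 1 b (Set.Icc t0 t1))
    (h1 : ∀ t ∈ Set.Icc t0 t1, γ₁ t = (x t, y t))
    (h2 : ∀ t ∈ Set.Icc t0 t1, γ₂ t = (x t + a t, y t + b t))
    (h3 : ∀ t ∈ Set.Icc t0 t1, γ₃ t = (x t + a t - b t, y t + a t + b t))
    (h4 : ∀ t ∈ Set.Icc t0 t1, γ₄ t = (x t - b t, y t + a t)) :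
    (∫ t in t0..t1, (γ₁ t).2 * derivWithin (fun s => (γ₁ s).1) (Set.Icc t0 t1) t)
      - (∫ t in t0..t1, (γ₂ t).2 * derivWithin (fun s => (γ₂ s).1) (Set.Icc t0 t1) t)
      + (∫ t in t0..t1, (γ₃ t).2 * derivWithin (fun s => (γ₃ s).1) (Set.Icc t0 t1) t)
      - (∫ t in t0..t1, (γ₄ t).2 * derivWithin (fun s => (γ₄ s).1) (Set.Icc t0 t1) t)
      = (a t1 ^ 2 - b t1 ^ 2) / 2 - (a t0 ^ 2 - b t0 ^ 2) / 2 := by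
  have i₁ := intervalIntegrable_mul_derivWithin_Icc ht hx hy.continuousOn
  have i₂ := intervalIntegrable_mul_derivWithin_Icc ht (hx.add ha) (hy.add hb).continuousOn
  have i₃ := intervalIntegrable_mul_derivWithin_Icc ht ((hx.add ha).sub hb)
    ((hy.add ha).add hb).continuousOn
  have i₄ := intervalIntegrable_mul_derivWithin_Icc ht (hx.sub hb) (hy.add ha).continuousOn
  rw [integral_snd_mul_derivWithin_fst_congr ht h1, integral_snd_mul_derivWithin_fst_congr ht h2,
    integral_snd_mul_derivWithin_fst_congr ht h3, integral_snd_mul_derivWithin_fst_congr ht h4,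
    ← integral_sub i₁ i₂, ← integral_add (i₁.sub i₂) i₃, ← integral_sub ((i₁.sub i₂).add i₃) i₄,
    ← integral_derivWithin_Icc_of_contDiffOn_Icc (((ha.pow 2).sub (hb.pow 2)).div_const 2) ht]
  refine integral_congr fun t hti => ?_
  rw [uIcc_of_le ht] at hti
  exact square_vertices_area_integrand_eq_derivWithin (hx.differentiableOn one_ne_zero t hti)
    (ha.differentiableOn one_ne_zero t hti) (hb.differentiableOn one_ne_zero t hti)

/-- Conserved integral of motion for squares: if `γ₁, γ₂, γ₃, γ₄` are C¹ curves on
`[t0,t1]` traversing the vertices of a continuously varying square with parameters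
`x, y, a, b`, then the alternating sum of the areas `∫_{γᵢ} y dx` equals
`(a(t1)² − b(t1)²)/2 − (a(t0)² − b(t0)²)/2`. -/
theorem stmt1 (t0 t1 : ℝ) (ht : t0 ≤ t1)
    (γ₁ γ₂ γ₃ γ₄ : ℝ → ℝ × ℝ) (x y a b : ℝ → ℝ)
    (hγ₁ : ContDiffOn ℝ 1 γ₁ (Set.Icc t0 t1))
    (hγ₂ : ContDiffOn ℝ 1 γ₂ (Set.Icc t0 t1))
    (hγ₃ : ContDiffOn ℝ 1 γ₃ (Set.Icc t0 t1))
    (hγ₄ : ContDiffOn ℝ 1 γ₄ (Set.Icc t0 t1))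
    (hx : ContDiffOn ℝ 1 x (Set.Icc t0 t1))
    (hy : ContDiffOn ℝ 1 y (Set.Icc t0 t1))
    (ha : ContDiffOn ℝ 1 a (Set.Icc t0 t1))
    (hb : ContDiffOn ℝ 1 b (Set.Icc t0 t1))
    (h1 : ∀ t ∈ Set.Icc t0 t1, γ₁ t = (x t, y t))
    (h2 : ∀ t ∈ Set.Icc t0 t1, γ₂ t = (x t + a t, y t + b t))
    (h3 : ∀ t ∈ Set.Icc t0 t1, γ₃ t = (x t + a t - b t, y t + a t + b t))
    (h4 : ∀ t ∈ Set.Icc t0 t1, γ₄ t = (x t - b t, y t + a t)) :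
    (∫ t in t0..t1, (γ₁ t).2 * derivWithin (fun s => (γ₁ s).1) (Set.Icc t0 t1) t)
      - (∫ t in t0..t1, (γ₂ t).2 * derivWithin (fun s => (γ₂ s).1) (Set.Icc t0 t1) t)
      + (∫ t in t0..t1, (γ₃ t).2 * derivWithin (fun s => (γ₃ s).1) (Set.Icc t0 t1) t)
      - (∫ t in t0..t1, (γ₄ t).2 * derivWithin (fun s => (γ₄ s).1) (Set.Icc t0 t1) t)
      = (a t1 ^ 2 - b t1 ^ 2) / 2 - (a t0 ^ 2 - b t0 ^ 2) / 2 :=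
  stmt1_general t0 t1 ht γ₁ γ₂ γ₃ γ₄ x y a b hx hy ha hb h1 h2 h3 h4
end

section
/- Let C < 1 + √2 and let f : ℝ → ℝ be C-Lipschitz. Then the graph of f does not inscribe infinitesimal squares: there is no sequence of nondegenerate squares with vertices (xₙ,yₙ), (xₙ+aₙ, yₙ+bₙ), (xₙ+aₙ−bₙ, yₙ+aₙ+bₙ), (xₙ−bₙ, yₙ+aₙ), with (aₙ,bₙ) → (0,0), (aₙ,bₙ) ≠ (0,0), such that all four vertices lie within o(|aₙ|+|bₙ|) of the graph {(t, f(t)) : t ∈ ℝ}. -/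
open Filter

lemma base_ineq (C E A B : ℝ) (hC0 : 0 ≤ C) (hE : 0 ≤ E) (hB : 0 ≤ B) (hBA : B ≤ A)
    (h2 : A ≤ C*B + E) (h3 : A+B ≤ C*(A-B) + E) :
    (1 + 2*C - C^2) * (A + B) ≤ (4*C + 2) * E := by
  rcases le_total 0 (1 + 2*C - C^2) with hd | hd
  · nlinarith [mul_le_mul_of_nonneg_left h2 hC0, mul_le_mul_of_nonneg_left h3 hC0,
      mul_nonneg hd (by linarith : (0:ℝ) ≤ A - B)]
  · nlinarith [mul_nonneg (by linarith : (0:ℝ) ≤ -(1 + 2*C - C^2)) (by linarith : (0:ℝ) ≤ A + B),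
      mul_nonneg (by linarith : (0:ℝ) ≤ 4*C+2) hE]

lemma key2_ineq (C E A B : ℝ) (hC0 : 0 ≤ C) (hE : 0 ≤ E) (hA : 0 ≤ A) (hB : 0 ≤ B)
    (h1 : B ≤ C*A + E) (h2 : A ≤ C*B + E) (h3 : A+B ≤ C*|A-B| + E) :
    (1 + 2*C - C^2) * (A + B) ≤ (4*C + 2) * E := by
  rcases le_total B A with h | h
  · rw [abs_of_nonneg (by linarith)] at h3
    exact base_ineq C E A B hC0 hE hB h h2 h3
  · rw [abs_of_nonpos (by linarith)] at h3
    have := base_ineq C E B A hC0 hE hA h h1 (by linarith)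
    linarith

lemma key_alg (C E a b : ℝ) (hC0 : 0 ≤ C) (hE : 0 ≤ E)
    (h1 : |b| ≤ C*|a| + E) (h2 : |a| ≤ C*|b| + E)
    (h3 : |a+b| ≤ C*|a-b| + E) (h4 : |a-b| ≤ C*|a+b| + E) :
    (1 + 2*C - C^2) * (|a| + |b|) ≤ (4*C + 2) * E := by
  apply key2_ineq C E _ _ hC0 hE (abs_nonneg a) (abs_nonneg b) h1 h2
  rcases le_or_gt 0 a with ha | ha <;> rcases le_or_gt 0 b with hb | hb
  · rw [abs_of_nonneg ha, abs_of_nonneg hb]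
    calc a + b ≤ |a+b| := le_abs_self _
      _ ≤ C*|a-b| + E := h3
  · rw [abs_of_nonneg ha, abs_of_neg hb]
    have habs : |a - -b| = |a+b| := by ring_nf
    rw [habs]
    calc a + -b ≤ |a-b| := by rw [show a + -b = a - b by ring]; exact le_abs_self _
      _ ≤ C*|a+b| + E := h4
  · rw [abs_of_neg ha, abs_of_nonneg hb]
    have habs : |-a - b| = |a+b| := by rw [show -a - b = -(a+b) by ring, abs_neg]
    rw [habs]
    calc -a + b ≤ |a-b| := by rw [show -a + b = -(a-b) by ring]; exact neg_le_abs _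
      _ ≤ C*|a+b| + E := h4
  · rw [abs_of_neg ha, abs_of_neg hb]
    have habs : |-a - -b| = |a-b| := by rw [show -a - -b = -(a-b) by ring, abs_neg]
    rw [habs]
    calc -a + -b ≤ |a+b| := by rw [show -a + -b = -(a+b) by ring]; exact neg_le_abs _
      _ ≤ C*|a-b| + E := h3

lemma graph_est (C : ℝ) (hC0 : 0 ≤ C) (f : ℝ → ℝ)
    (hf : ∀ s t : ℝ, |f s - f t| ≤ C * |s - t|) (p q : ℝ × ℝ) (e : ℝ)
    (hp : Metric.infDist p {r : ℝ × ℝ | r.2 = f r.1} ≤ e)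
    (hq : Metric.infDist q {r : ℝ × ℝ | r.2 = f r.1} ≤ e) :
    |p.2 - q.2| ≤ C * |p.1 - q.1| + (1 + C) * (2 * e) := by
  have hne : ({r : ℝ × ℝ | r.2 = f r.1}).Nonempty := ⟨(0, f 0), rfl⟩
  apply le_of_forall_pos_le_add
  intro ε hε
  have hd : (0:ℝ) < 2*C + 3 := by linarith
  set ε' := ε / (2*C + 3) with hε'def
  have hε' : 0 < ε' := by positivity
  have h1 : Metric.infDist p {r : ℝ × ℝ | r.2 = f r.1} < e + ε' := by linarith
  have h2 : Metric.infDist q {r : ℝ × ℝ | r.2 = f r.1} < e + ε' := by linarith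
  obtain ⟨g, hg, hgd⟩ := (Metric.infDist_lt_iff hne).1 h1
  obtain ⟨h, hh, hhd⟩ := (Metric.infDist_lt_iff hne).1 h2
  simp only [Set.mem_setOf_eq] at hg hh
  rw [Prod.dist_eq, sup_lt_iff, Real.dist_eq, Real.dist_eq] at hgd hhd
  have hft := hf g.1 h.1
  have key : |g.1 - h.1| ≤ |p.1 - q.1| + 2 * (e + ε') := by
    calc |g.1 - h.1| = |(g.1 - p.1) + (p.1 - q.1) + (q.1 - h.1)| := by ring_nf
      _ ≤ |(g.1 - p.1) + (p.1 - q.1)| + |q.1 - h.1| := abs_add_le _ _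
      _ ≤ |g.1 - p.1| + |p.1 - q.1| + |q.1 - h.1| := by linarith [abs_add_le (g.1 - p.1) (p.1 - q.1)]
      _ ≤ |p.1 - q.1| + 2 * (e + ε') := by
          rw [abs_sub_comm g.1 p.1]
          linarith [hgd.1.le, hhd.1.le]
  have hC3 : C * |g.1 - h.1| ≤ C * (|p.1 - q.1| + 2 * (e + ε')) :=
    mul_le_mul_of_nonneg_left key hC0
  have hfin : |p.2 - q.2| ≤ |p.2 - g.2| + |f g.1 - f h.1| + |q.2 - h.2| := by
    have heq : p.2 - q.2 = (p.2 - g.2) + (g.2 - h.2) + (h.2 - q.2) := by ring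
    rw [heq]
    calc |(p.2 - g.2) + (g.2 - h.2) + (h.2 - q.2)|
        ≤ |(p.2 - g.2) + (g.2 - h.2)| + |h.2 - q.2| := abs_add_le _ _
      _ ≤ |p.2 - g.2| + |g.2 - h.2| + |h.2 - q.2| := by linarith [abs_add_le (p.2 - g.2) (g.2 - h.2)]
      _ = |p.2 - g.2| + |f g.1 - f h.1| + |q.2 - h.2| := by
          rw [hg, hh, abs_sub_comm (f h.1) q.2]
  have hε2 : (2*C + 2) * ε' ≤ ε := by
    rw [hε'def]
    rw [show (2*C+2) * (ε / (2*C+3)) = ((2*C+2)/(2*C+3)) * ε by ring]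
    nlinarith [div_le_one_of_le₀ (by linarith : 2*C+2 ≤ 2*C+3) (by linarith : (0:ℝ) ≤ 2*C+3)]
  linarith [hgd.2.le, hhd.2.le, hft, hC3]

/-- The graph of a `C`-Lipschitz function with `C < 1 + √2` does not inscribe
infinitesimal squares. -/
theorem stmt5 (C : ℝ) (hC : C < 1 + Real.sqrt 2) (f : ℝ → ℝ)
    (hf : ∀ s t : ℝ, |f s - f t| ≤ C * |s - t|) :
    ¬ ∃ x y a b c : ℕ → ℝ,
      (∀ n, (a n, b n) ≠ ((0 : ℝ), (0 : ℝ))) ∧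
      Tendsto (fun n => (a n, b n)) atTop (nhds ((0 : ℝ), (0 : ℝ))) ∧
      Tendsto c atTop (nhds (0 : ℝ)) ∧
      (∀ n : ℕ,
        Metric.infDist ((x n, y n) : ℝ × ℝ) {q : ℝ × ℝ | q.2 = f q.1}
          ≤ c n * (|a n| + |b n|) ∧
        Metric.infDist ((x n + a n, y n + b n) : ℝ × ℝ) {q : ℝ × ℝ | q.2 = f q.1}
          ≤ c n * (|a n| + |b n|) ∧
        Metric.infDist ((x n + a n - b n, y n + a n + b n) : ℝ × ℝ) {q : ℝ × ℝ | q.2 = f q.1}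
          ≤ c n * (|a n| + |b n|) ∧
        Metric.infDist ((x n - b n, y n + a n) : ℝ × ℝ) {q : ℝ × ℝ | q.2 = f q.1}
          ≤ c n * (|a n| + |b n|)) := by
  rintro ⟨x, y, a, b, c, hne0, -, hc, hdist⟩
  set C' := max C 0 with hC'def
  have hC'0 : 0 ≤ C' := le_max_right _ _
  have hC' : C' < 1 + Real.sqrt 2 := max_lt hC (by positivity)
  have hf' : ∀ s t : ℝ, |f s - f t| ≤ C' * |s - t| := fun s t =>
    (hf s t).trans (mul_le_mul_of_nonneg_right (le_max_left _ _) (abs_nonneg _))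
  have hδ : 0 < 1 + 2*C' - C'^2 := by
    have hsq : (C' - 1)^2 < (Real.sqrt 2)^2 := by
      apply sq_lt_sq'
      · nlinarith [Real.sq_sqrt (show (0:ℝ) ≤ 2 by norm_num), Real.sqrt_nonneg 2]
      · linarith
    rw [Real.sq_sqrt (by norm_num : (0:ℝ) ≤ 2)] at hsq
    nlinarith
  set δ := 1 + 2*C' - C'^2 with hδdef
  set K := (4*C' + 2) * ((1 + C') * 2) with hKdef
  have hK : 0 < K := by nlinarith
  obtain ⟨n, hn⟩ := (hc.eventually_lt_const (show (0:ℝ) < δ / K by positivity)).exists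
  -- at index n
  obtain ⟨hd1, hd2, hd3, hd4⟩ := hdist n
  have hr : 0 < |a n| + |b n| := by
    rcases (abs_nonneg (a n)).lt_or_eq with h | h
    · linarith [abs_nonneg (b n)]
    rcases (abs_nonneg (b n)).lt_or_eq with h' | h'
    · linarith [abs_nonneg (a n)]
    exact absurd (Prod.ext (abs_eq_zero.1 h.symm) (abs_eq_zero.1 h'.symm)) (hne0 n)
  set e := c n * (|a n| + |b n|) with hedef
  have he : 0 ≤ e := le_trans Metric.infDist_nonneg hd1
  set E := (1 + C') * (2 * e) with hEdef
  have hE : 0 ≤ E := by nlinarith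
  have g1 : |b n| ≤ C' * |a n| + E := by
    have h := graph_est C' hC'0 f hf' (x n + a n, y n + b n) (x n, y n) e hd2 hd1
    dsimp only at h
    rwa [show x n + a n - x n = a n by ring, show y n + b n - y n = b n by ring] at h
  have g2 : |a n| ≤ C' * |b n| + E := by
    have h := graph_est C' hC'0 f hf' (x n - b n, y n + a n) (x n, y n) e hd4 hd1
    dsimp only at h
    rwa [show x n - b n - x n = -(b n) by ring, show y n + a n - y n = a n by ring,
      abs_neg] at h
  have g3 : |a n + b n| ≤ C' * |a n - b n| + E := by
    have h := graph_est C' hC'0 f hf' (x n + a n - b n, y n + a n + b n) (x n, y n) e hd3 hd1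
    dsimp only at h
    rwa [show x n + a n - b n - x n = a n - b n by ring,
      show y n + a n + b n - y n = a n + b n by ring] at h
  have g4 : |a n - b n| ≤ C' * |a n + b n| + E := by
    have h := graph_est C' hC'0 f hf' (x n - b n, y n + a n) (x n + a n, y n + b n) e hd4 hd2
    dsimp only at h
    rwa [show x n - b n - (x n + a n) = -(a n + b n) by ring,
      show y n + a n - (y n + b n) = a n - b n by ring, abs_neg] at h
  have hmain := key_alg C' E (a n) (b n) hC'0 hE g1 g2 g3 g4
  have hEeq : (4*C' + 2) * E = K * c n * (|a n| + |b n|) := by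
    rw [hEdef, hedef, hKdef]; ring
  rw [hEeq] at hmain
  have hKc : K * c n < δ := by
    have := mul_lt_mul_of_pos_left hn hK
    rwa [mul_div_cancel₀ δ hK.ne'] at this
  have hlt : K * c n * (|a n| + |b n|) < δ * (|a n| + |b n|) :=
    mul_lt_mul_of_pos_right hKc hr
  have : δ * (|a n| + |b n|) < δ * (|a n| + |b n|) := lt_of_le_of_lt hmain hlt
  exact lt_irrefl _ this
end

section
/- Let a₁, a₂, b₁, b₂ be distinct real numbers. Then the pairs {a₁, a₂} and {−b₁, −b₂} have non-crossing sums if and only if the number of pairs (i,j) ∈ {1,2}×{1,2} with aᵢ < bⱼ is even. -/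
/-- Two pairs of real numbers `{y₁₁, y₁₂}`, `{y₂₁, y₂₂}` have *non-crossing sums* if all
four sums `y₁ⱼ + y₂ⱼ′` are nonzero and the alternating sum of their signs vanishes. -/
lemma sgn_aux (x y : ℝ) (h : x ≠ y) :
    Real.sign (x + -y) = if x < y then -1 else 1 := by
  rcases lt_or_gt_of_ne h with h' | h'
  · rw [if_pos h', Real.sign_of_neg (by linarith)]
  · rw [if_neg (not_lt.mpr h'.le), Real.sign_of_pos (by linarith)]

def NCS2 (y11 y12 y21 y22 : ℝ) : Prop :=
  (y11 + y21 ≠ 0 ∧ y11 + y22 ≠ 0 ∧ y12 + y21 ≠ 0 ∧ y12 + y22 ≠ 0) ∧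
    Real.sign (y11 + y21) - Real.sign (y12 + y21) - Real.sign (y11 + y22)
      + Real.sign (y12 + y22) = 0

/-- For distinct reals `a₁, a₂, b₁, b₂`, the pairs `{a₁, a₂}` and `{−b₁, −b₂}` have
non-crossing sums iff the number of pairs `(i,j)` with `aᵢ < bⱼ` is even. -/
theorem stmt8 (a1 a2 b1 b2 : ℝ)
    (h12 : a1 ≠ a2) (h13 : a1 ≠ b1) (h14 : a1 ≠ b2)
    (h23 : a2 ≠ b1) (h24 : a2 ≠ b2) (h34 : b1 ≠ b2) :
    NCS2 a1 a2 (-b1) (-b2) ↔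
      Even ((if a1 < b1 then 1 else 0) + (if a1 < b2 then 1 else 0)
        + (if a2 < b1 then 1 else 0) + (if a2 < b2 then 1 else 0) : ℕ) := by
  have n1 : a1 + -b1 ≠ 0 := fun h => h13 (by linarith)
  have n2 : a1 + -b2 ≠ 0 := fun h => h14 (by linarith)
  have n3 : a2 + -b1 ≠ 0 := fun h => h23 (by linarith)
  have n4 : a2 + -b2 ≠ 0 := fun h => h24 (by linarith)
  simp only [NCS2, n1, n2, n3, n4, ne_eq, not_false_iff, true_and,
    sgn_aux _ _ h13, sgn_aux _ _ h14, sgn_aux _ _ h23, sgn_aux _ _ h24]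
  split_ifs <;> norm_num [Nat.even_add_one, parity_simps] <;> linarith
end

section
/- Let 0 < a < b < c be real numbers and x, y, z ∈ ℝ, and suppose that for all choices y₂ ∈ {y, y+b} and y₃ ∈ {z, z+c} one has sgn(x + y₂ + y₃) = sgn(x + a + y₂ + y₃) and all eight sums x′+y′+z′ (x′ ∈ {x,x+a}, y′ ∈ {y,y+b}, z′ ∈ {z,z+c}) are nonzero. Then the pairs {x, x+a}, {y, y+b}, {z, z+c} have non-crossing sums; conversely, if they have non-crossing sums then sgn(x + y₂ + y₃) = sgn(x + a + y₂ + y₃) for all such y₂, y₃. -/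
/-- Three pairs of reals `{x₁,x₂}, {y₁,y₂}, {z₁,z₂}` have *non-crossing sums* if all
eight triple sums are nonzero and the alternating sum
`∑_{j₁,j₂,j₃∈{1,2}} (−1)^{j₁+j₂+j₃} sgn(xⱼ₁+yⱼ₂+zⱼ₃)` vanishes. -/
def NCS3 (x1 x2 y1 y2 z1 z2 : ℝ) : Prop :=
  (∀ u ∈ ({x1, x2} : Set ℝ), ∀ v ∈ ({y1, y2} : Set ℝ), ∀ w ∈ ({z1, z2} : Set ℝ),
    u + v + w ≠ 0) ∧
    -Real.sign (x1 + y1 + z1) + Real.sign (x2 + y1 + z1) + Real.sign (x1 + y2 + z1)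
      + Real.sign (x1 + y1 + z2) - Real.sign (x2 + y2 + z1) - Real.sign (x2 + y1 + z2)
      - Real.sign (x1 + y2 + z2) + Real.sign (x2 + y2 + z2) = 0

lemma sign_step (a p : ℝ) (ha : 0 < a) (hp : p ≠ 0) (hpa : p + a ≠ 0) :
    Real.sign p = Real.sign (p + a) ∨ (p < 0 ∧ 0 < p + a) := by
  rcases hp.lt_or_gt with h | h
  · rcases hpa.lt_or_gt with h' | h'
    · left; rw [Real.sign_of_neg h, Real.sign_of_neg h']
    · right; exact ⟨h, h'⟩
  · left
    rw [Real.sign_of_pos h, Real.sign_of_pos (by linarith : (0:ℝ) < p + a)]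

lemma aux9 (a b c p : ℝ) (ha : 0 < a) (hab : a < b) (hbc : b < c)
    (n1 : p ≠ 0) (n2 : p + a ≠ 0) (n3 : p + b ≠ 0) (n4 : p + a + b ≠ 0)
    (n5 : p + c ≠ 0) (n6 : p + a + c ≠ 0) (n7 : p + b + c ≠ 0) (n8 : p + a + b + c ≠ 0)
    (hsum : -Real.sign p + Real.sign (p + a) + Real.sign (p + b) + Real.sign (p + c)
      - Real.sign (p + a + b) - Real.sign (p + a + c) - Real.sign (p + b + c)
      + Real.sign (p + a + b + c) = 0) :
    Real.sign p = Real.sign (p + a) ∧ Real.sign (p + b) = Real.sign (p + a + b) ∧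
    Real.sign (p + c) = Real.sign (p + a + c) ∧
    Real.sign (p + b + c) = Real.sign (p + a + b + c) := by
  have h1 := sign_step a p ha n1 n2
  have h2 := sign_step a (p + b) ha n3 (by rwa [show p + b + a = p + a + b by ring])
  rw [show p + b + a = p + a + b by ring] at h2
  have h3 := sign_step a (p + c) ha n5 (by rwa [show p + c + a = p + a + c by ring])
  rw [show p + c + a = p + a + c by ring] at h3
  have h4 := sign_step a (p + b + c) ha n7
    (by rwa [show p + b + c + a = p + a + b + c by ring])
  rw [show p + b + c + a = p + a + b + c by ring] at h4
  rcases h1 with h1 | ⟨h1a, h1b⟩ <;>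
  rcases h2 with h2 | ⟨h2a, h2b⟩ <;>
  rcases h3 with h3 | ⟨h3a, h3b⟩ <;>
  rcases h4 with h4 | ⟨h4a, h4b⟩
  · exact ⟨h1, h2, h3, h4⟩
  all_goals {
    exfalso
    try rw [Real.sign_of_neg h1a, Real.sign_of_pos h1b] at hsum
    try rw [Real.sign_of_neg h2a, Real.sign_of_pos h2b] at hsum
    try rw [Real.sign_of_neg h3a, Real.sign_of_pos h3b] at hsum
    try rw [Real.sign_of_neg h4a, Real.sign_of_pos h4b] at hsum
    linarith
  }

/-- For `0 < a < b < c`: the pairs `{x,x+a}, {y,y+b}, {z,z+c}` have non-crossing sums iff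
(given all eight sums nonzero) the pair `{x, x+a}` with smallest difference has no
influence on the signs of the triple sums. -/
theorem stmt9 (a b c x y z : ℝ) (ha : 0 < a) (hab : a < b) (hbc : b < c) :
    (((∀ u ∈ ({x, x + a} : Set ℝ), ∀ v ∈ ({y, y + b} : Set ℝ), ∀ w ∈ ({z, z + c} : Set ℝ),
        u + v + w ≠ 0) ∧
      (∀ v ∈ ({y, y + b} : Set ℝ), ∀ w ∈ ({z, z + c} : Set ℝ),
        Real.sign (x + v + w) = Real.sign (x + a + v + w))) →
      NCS3 x (x + a) y (y + b) z (z + c)) ∧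
    (NCS3 x (x + a) y (y + b) z (z + c) →
      ∀ v ∈ ({y, y + b} : Set ℝ), ∀ w ∈ ({z, z + c} : Set ℝ),
        Real.sign (x + v + w) = Real.sign (x + a + v + w)) := by
  constructor
  · rintro ⟨hne, hsgn⟩
    refine ⟨hne, ?_⟩
    have e1 := hsgn y (by simp) z (by simp)
    have e2 := hsgn (y + b) (by simp) z (by simp)
    have e3 := hsgn y (by simp) (z + c) (by simp)
    have e4 := hsgn (y + b) (by simp) (z + c) (by simp)
    rw [e1, e2, e3, e4]
    ring
  · rintro ⟨hne, hsum⟩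
    set p := x + y + z with hp
    have n1 : p ≠ 0 := by
      have := hne x (by simp) y (by simp) z (by simp); rwa [hp]
    have n2 : p + a ≠ 0 := by
      have := hne (x + a) (by simp) y (by simp) z (by simp)
      rwa [show x + a + y + z = p + a by rw [hp]; ring] at this
    have n3 : p + b ≠ 0 := by
      have := hne x (by simp) (y + b) (by simp) z (by simp)
      rwa [show x + (y + b) + z = p + b by rw [hp]; ring] at this
    have n4 : p + a + b ≠ 0 := by
      have := hne (x + a) (by simp) (y + b) (by simp) z (by simp)
      rwa [show x + a + (y + b) + z = p + a + b by rw [hp]; ring] at this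
    have n5 : p + c ≠ 0 := by
      have := hne x (by simp) y (by simp) (z + c) (by simp)
      rwa [show x + y + (z + c) = p + c by rw [hp]; ring] at this
    have n6 : p + a + c ≠ 0 := by
      have := hne (x + a) (by simp) y (by simp) (z + c) (by simp)
      rwa [show x + a + y + (z + c) = p + a + c by rw [hp]; ring] at this
    have n7 : p + b + c ≠ 0 := by
      have := hne x (by simp) (y + b) (by simp) (z + c) (by simp)
      rwa [show x + (y + b) + (z + c) = p + b + c by rw [hp]; ring] at this
    have n8 : p + a + b + c ≠ 0 := by
      have := hne (x + a) (by simp) (y + b) (by simp) (z + c) (by simp)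
      rwa [show x + a + (y + b) + (z + c) = p + a + b + c by rw [hp]; ring] at this
    rw [
        show x + a + y + z = p + a by rw [hp]; ring,
        show x + (y + b) + z = p + b by rw [hp]; ring,
        show x + a + (y + b) + z = p + a + b by rw [hp]; ring,
        show x + y + (z + c) = p + c by rw [hp]; ring,
        show x + a + y + (z + c) = p + a + c by rw [hp]; ring,
        show x + (y + b) + (z + c) = p + b + c by rw [hp]; ring,
        show x + a + (y + b) + (z + c) = p + a + b + c by rw [hp]; ring] at hsum
    obtain ⟨g1, g2, g3, g4⟩ := aux9 a b c p ha hab hbc n1 n2 n3 n4 n5 n6 n7 n8 hsum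
    intro v hv w hw
    simp only [Set.mem_insert_iff, Set.mem_singleton_iff] at hv hw
    rcases hv with rfl | rfl <;> rcases hw with rfl | rfl
    · rwa [show x + v + w = p by rw [hp],
          show x + a + v + w = p + a by rw [hp]; ring]
    · rwa [show x + v + (z + c) = p + c by rw [hp]; ring,
          show x + a + v + (z + c) = p + a + c by rw [hp]; ring]
    · rwa [show x + (y + b) + w = p + b by rw [hp]; ring,
          show x + a + (y + b) + w = p + a + b by rw [hp]; ring]
    · rwa [show x + (y + b) + (z + c) = p + b + c by rw [hp]; ring,
          show x + a + (y + b) + (z + c) = p + a + b + c by rw [hp]; ring]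
end

section
/- Let k₁, k₂, k₃ be odd and for each i let y_{i,1}, …, y_{i,k_i} be distinct reals, with the conventions of Conjecture adf. Suppose condition (i) holds: for each i and each 0 ≤ p < q ≤ k_i with p ≡ q (mod 2), the pairs {y_{i,p}, y_{i,p+1}} and {−y_{i,q}, −y_{i,q+1}} have non-crossing sums (with y_{i,0} = y_{i,k_i+1} = −∞). Then for each i, the winding number W_i(y) := ½ + ½ ∑_{j=1}^{k_i} (−1)^{j−1} sgn(y_{i,j} − y) satisfies W_i(y_{i,j}) = ½ for all j = 1,…,k_i, and W_i(y) ∈ {0, 1} for all y ∉ {y_{i,1},…,y_{i,k_i}}. -/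
/-!
Write `D(t)` (`altRank`) for the number of odd-indexed vertices below `t` minus the number of
even-indexed ones, so that `W(t) = 1 - D(t)` away from the vertices. Pairing the vertices along
the chords of one parity (the ray to `−∞` included) writes `D` as a sum of contributions of these
chords, and a chord that does not cross the chord `{y_c, y_{c+1}}` contributes the same amount
at `y_c` and at `y_{c+1}`. Hence `D(y_{c+1}) - D(y_c) = (-1)^(c+1)`, and `D(y_1) = 0` by the ray
`{−∞, y_1}`, so `D(y_m)` is `1` for even `m` and `0` for odd `m`: in increasing order the vertices
alternate between odd and even indices, starting with an odd one. This gives `W = ½` at the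
vertices and `W ∈ {0, 1}` between them.
-/

open scoped Classical

/-- Sign function on extended reals, with `sgn(−∞) = −1` and `sgn(+∞) = 1`. -/
noncomputable def esgn (x : EReal) : ℝ := if x < 0 then -1 else if 0 < x then 1 else 0

/-- Two pairs `{a₁,a₂}`, `{b₁,b₂}` of extended reals have *non-crossing sums* if all four
sums are nonzero and `∑_{j,j′} (−1)^{j+j′} sgn(aⱼ + bⱼ′) = 0`. -/
def NCS2E (a1 a2 b1 b2 : EReal) : Prop :=
  (a1 + b1 ≠ 0 ∧ a1 + b2 ≠ 0 ∧ a2 + b1 ≠ 0 ∧ a2 + b2 ≠ 0) ∧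
    esgn (a1 + b1) - esgn (a2 + b1) - esgn (a1 + b2) + esgn (a2 + b2) = 0

/-- The extension of `Y : ℕ → ℝ` (with meaningful indices `1, …, k`) by the convention
`y₀ = y_{k+1} = −∞`. -/
noncomputable def extY (k : ℕ) (Y : ℕ → ℝ) (j : ℕ) : EReal :=
  if 1 ≤ j ∧ j ≤ k then ((Y j : ℝ) : EReal) else ⊥

/-- The winding number `W(t) = ½ + ½ ∑_{j=1}^{k} (−1)^{j−1} sgn(yⱼ − t)`. -/
noncomputable def wind (k : ℕ) (Y : ℕ → ℝ) (t : ℝ) : ℝ :=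
  1 / 2 + 1 / 2 * ∑ j ∈ Finset.range k, (-1 : ℝ) ^ j * Real.sign (Y (j + 1) - t)

open Finset

section LinearOrder

variable {α : Type*} [LinearOrder α]

lemma mem_uIoo_iff_lt_iff_lt {a b c : α} (hca : c ≠ a) (hcb : c ≠ b) :
    c ∈ Set.uIoo a b ↔ (a < c ↔ c < b) := by
  rw [Set.uIoo_eq_union, Set.mem_union, Set.mem_Ioo, Set.mem_Ioo]
  rcases lt_or_gt_of_ne hca with h1 | h1 <;> rcases lt_or_gt_of_ne hcb with h2 | h2 <;>
    simp [h1, h2, h1.not_gt, h2.not_gt]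

def NonCrossing (a b u w : α) : Prop := u ∈ Set.uIoo a b ↔ w ∈ Set.uIoo a b

lemma nonCrossing_comm {a b u w : α} (hua : u ≠ a) (hub : u ≠ b) (hwa : w ≠ a) (hwb : w ≠ b) :
    NonCrossing a b u w ↔ NonCrossing u w a b := by
  have lt_iff_not_lt {p q : α} (h : p ≠ q) : p < q ↔ ¬ q < p :=
    ⟨fun h' => h'.not_gt, fun h' => lt_of_le_of_ne (not_lt.1 h') h⟩
  rw [NonCrossing, NonCrossing, mem_uIoo_iff_lt_iff_lt hua hub, mem_uIoo_iff_lt_iff_lt hwa hwb,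
    mem_uIoo_iff_lt_iff_lt hua.symm hwa.symm, mem_uIoo_iff_lt_iff_lt hub.symm hwb.symm,
    lt_iff_not_lt hua, lt_iff_not_lt hwb.symm]
  tauto

lemma nonCrossing_of_sign_sum {a₁ a₂ b₁ b₂ : α} (h₁₁ : b₁ ≠ a₁) (h₁₂ : b₁ ≠ a₂)
    (h₂₁ : b₂ ≠ a₁) (h₂₂ : b₂ ≠ a₂)
    (h : ((if b₁ < a₁ then 1 else -1) - (if b₁ < a₂ then 1 else -1) -
      (if b₂ < a₁ then 1 else -1) + (if b₂ < a₂ then 1 else -1) : ℝ) = 0) :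
    NonCrossing a₁ a₂ b₁ b₂ := by
  rw [NonCrossing, mem_uIoo_iff_lt_iff_lt h₁₁ h₁₂, mem_uIoo_iff_lt_iff_lt h₂₁ h₂₂]
  revert h
  rcases lt_or_gt_of_ne h₁₁ with c₁ | c₁ <;> rcases lt_or_gt_of_ne h₁₂ with c₂ | c₂ <;>
    rcases lt_or_gt_of_ne h₂₁ with c₃ | c₃ <;> rcases lt_or_gt_of_ne h₂₂ with c₄ | c₄ <;>
    norm_num [c₁, c₂, c₃, c₄, c₁.not_gt, c₂.not_gt, c₃.not_gt, c₄.not_gt]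

def crossSign (u w t : α) : ℤ := (if u < t then 1 else 0) - if w < t then 1 else 0

lemma indicator_lt_sub_indicator_lt {a b u : α} (hua : u ≠ a) (hub : u ≠ b) :
    ((if u < b then 1 else 0) - if u < a then 1 else 0 : ℤ) =
      if u ∈ Set.uIoo a b then (if a < b then 1 else -1) else 0 := by
  rw [mem_uIoo_iff_lt_iff_lt hua hub]
  rcases lt_or_gt_of_ne hua with h1 | h1 <;> rcases lt_or_gt_of_ne hub with h2 | h2 <;>
    simp [h1, h2, h1.not_gt, h2.not_gt] <;> order

lemma crossSign_eq_of_nonCrossing {a b u w : α} (h : NonCrossing a b u w) (hua : u ≠ a)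
    (hub : u ≠ b) (hwa : w ≠ a) (hwb : w ≠ b) : crossSign u w b = crossSign u w a := by
  have hu := indicator_lt_sub_indicator_lt hua hub
  have hw := indicator_lt_sub_indicator_lt hwa hwb
  rw [if_congr h rfl rfl] at hu
  unfold crossSign
  linarith

lemma crossSign_sub_crossSign_self {a b : α} (h : a ≠ b) :
    crossSign a b b - crossSign a b a = 1 := by
  rcases lt_or_gt_of_ne h with h | h <;> simp [crossSign, h, h.not_gt]

end LinearOrder

section Sums

variable {R : Type*} [CommRing R]

lemma sum_range_alternating_eq_odd_pairs (f : ℕ → R) (n : ℕ) :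
    ∑ j ∈ range (2 * n + 1), (-1) ^ j * f (j + 1) =
      f (2 * n + 2) + ∑ i ∈ range (n + 1), (f (2 * i + 1) - f (2 * i + 2)) := by
  induction n with
  | zero => simp
  | succ n ih =>
    rw [show 2 * (n + 1) + 1 = 2 * n + 1 + 1 + 1 by ring, sum_range_succ, sum_range_succ, ih,
      sum_range_succ (n := n + 1), (show Odd (2 * n + 1) from ⟨n, rfl⟩).neg_one_pow,
      (show Even (2 * n + 1 + 1) from ⟨n + 1, by ring⟩).neg_one_pow]
    ring_nf

lemma sum_range_alternating_eq_even_pairs (f : ℕ → R) (n : ℕ) :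
    ∑ j ∈ range (2 * n + 1), (-1) ^ j * f (j + 1) =
      f 0 - ∑ i ∈ range (n + 1), (f (2 * i) - f (2 * i + 1)) := by
  induction n with
  | zero => simp
  | succ n ih =>
    rw [show 2 * (n + 1) + 1 = 2 * n + 1 + 1 + 1 by ring, sum_range_succ, sum_range_succ, ih,
      sum_range_succ (n := n + 1), (show Odd (2 * n + 1) from ⟨n, rfl⟩).neg_one_pow,
      (show Even (2 * n + 1 + 1) from ⟨n + 1, by ring⟩).neg_one_pow]
    ring_nf

end Sums

section Chords

variable {α : Type*} [LinearOrder α]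

def altRank (k : ℕ) (x : ℕ → α) (t : α) : ℤ :=
  ∑ j ∈ range k, (-1) ^ j * if x (j + 1) < t then 1 else 0

lemma altRank_eq_sum_odd_chords (n : ℕ) (x : ℕ → α) (t : α) :
    altRank (2 * n + 1) x t = (if x (2 * n + 2) < t then 1 else 0) +
      ∑ i ∈ range (n + 1), crossSign (x (2 * i + 1)) (x (2 * i + 1 + 1)) t :=
  sum_range_alternating_eq_odd_pairs (fun j => if x j < t then 1 else 0) n

lemma altRank_eq_sum_even_chords (n : ℕ) (x : ℕ → α) (t : α) :
    altRank (2 * n + 1) x t = (if x 0 < t then 1 else 0) -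
      ∑ i ∈ range (n + 1), crossSign (x (2 * i)) (x (2 * i + 1)) t :=
  sum_range_alternating_eq_even_pairs (fun j => if x j < t then 1 else 0) n

/-- Chord `p` joins `x p` and `x (p + 1)`; the vertices are `x 1, …, x k`, and `x 0`, `x (k + 1)`
play the role of `−∞`. -/
structure NoncrossingChords (k : ℕ) (x : ℕ → α) : Prop where
  injOn : Set.InjOn x (Set.Icc 1 k)
  lt_left : ∀ j, 1 ≤ j → j ≤ k → x 0 < x j
  lt_right : ∀ j, 1 ≤ j → j ≤ k → x (k + 1) < x j
  nonCrossing : ∀ p q, p < q → q ≤ k → p % 2 = q % 2 →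
    NonCrossing (x p) (x (p + 1)) (x q) (x (q + 1))

lemma ne_of_injOn_of_lt {k : ℕ} {x : ℕ → α} (hinj : Set.InjOn x (Set.Icc 1 k))
    (h₀ : ∀ j, 1 ≤ j → j ≤ k → x 0 < x j) (h₁ : ∀ j, 1 ≤ j → j ≤ k → x (k + 1) < x j)
    {i j : ℕ} (hi : i ≤ k + 1) (hj : j ≤ k + 1) (hij : i ≠ j)
    (hvert : 1 ≤ i ∧ i ≤ k ∨ 1 ≤ j ∧ j ≤ k) : x i ≠ x j := by
  wlog hv : 1 ≤ i ∧ i ≤ k generalizing i j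
  · exact (this hj hi hij.symm hvert.symm (hvert.resolve_left hv)).symm
  by_cases hj' : 1 ≤ j ∧ j ≤ k
  · exact fun h => hij (hinj hv hj' h)
  · obtain rfl | rfl : j = 0 ∨ j = k + 1 := by omega
    · exact (h₀ i hv.1 hv.2).ne'
    · exact (h₁ i hv.1 hv.2).ne'

namespace NoncrossingChords

variable {k : ℕ} {x : ℕ → α}

lemma ne (hx : NoncrossingChords k x) {i j : ℕ} (hi : i ≤ k + 1) (hj : j ≤ k + 1) (hij : i ≠ j)
    (hvert : 1 ≤ i ∧ i ≤ k ∨ 1 ≤ j ∧ j ≤ k) : x i ≠ x j :=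
  ne_of_injOn_of_lt hx.injOn hx.lt_left hx.lt_right hi hj hij hvert

lemma nonCrossing_of_ne (hx : NoncrossingChords k x) (hk : Odd k) {p q : ℕ} (hp : p ≤ k)
    (hq : q ≤ k) (hpq : p ≠ q) (hpar : p % 2 = q % 2) :
    NonCrossing (x p) (x (p + 1)) (x q) (x (q + 1)) := by
  obtain ⟨n, rfl⟩ := hk
  rcases lt_or_gt_of_ne hpq with h | h
  · exact hx.nonCrossing p q h hq hpar
  · exact (nonCrossing_comm (hx.ne (by omega) (by omega) (by omega) (by omega))
      (hx.ne (by omega) (by omega) (by omega) (by omega))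
      (hx.ne (by omega) (by omega) (by omega) (by omega))
      (hx.ne (by omega) (by omega) (by omega) (by omega))).1
      (hx.nonCrossing q p h hp hpar.symm)

lemma sum_crossSign_sub {n : ℕ} (hx : NoncrossingChords (2 * n + 1) x) {c r : ℕ} (hr : c % 2 = r)
    (hc : c + 1 ≤ 2 * n + 1) :
    ∑ i ∈ range (n + 1), (crossSign (x (2 * i + r)) (x (2 * i + r + 1)) (x (c + 1)) -
      crossSign (x (2 * i + r)) (x (2 * i + r + 1)) (x c)) = 1 := by
  rw [sum_eq_single_of_mem (c / 2) (mem_range.2 (by omega))]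
  · rw [show 2 * (c / 2) + r = c by omega]
    exact crossSign_sub_crossSign_self (hx.ne (by omega) (by omega) (by omega) (by omega))
  · intro i hi hic
    have hi := mem_range.1 hi
    rw [sub_eq_zero]
    exact crossSign_eq_of_nonCrossing
      (hx.nonCrossing_of_ne ⟨n, rfl⟩ (by omega) (by omega) (by omega) (by omega))
      (hx.ne (by omega) (by omega) (by omega) (by omega))
      (hx.ne (by omega) (by omega) (by omega) (by omega))
      (hx.ne (by omega) (by omega) (by omega) (by omega))
      (hx.ne (by omega) (by omega) (by omega) (by omega))

lemma altRank_succ (hx : NoncrossingChords k x) (hk : Odd k) {c : ℕ} (hc : 1 ≤ c)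
    (hck : c + 1 ≤ k) : altRank k x (x (c + 1)) = altRank k x (x c) + (-1) ^ (c + 1) := by
  obtain ⟨n, rfl⟩ := hk
  rcases Nat.even_or_odd c with hpar | hpar
  · have hsum := hx.sum_crossSign_sub (Nat.even_iff.1 hpar) hck
    simp only [add_zero, sum_sub_distrib] at hsum
    rw [altRank_eq_sum_even_chords, altRank_eq_sum_even_chords,
      if_pos (hx.lt_left _ (by omega) hck), if_pos (hx.lt_left _ hc (by omega)),
      hpar.add_one.neg_one_pow]
    linarith
  · have hsum := hx.sum_crossSign_sub (Nat.odd_iff.1 hpar) hck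
    rw [sum_sub_distrib] at hsum
    rw [altRank_eq_sum_odd_chords, altRank_eq_sum_odd_chords,
      if_pos (hx.lt_right _ (by omega) hck), if_pos (hx.lt_right _ hc (by omega)),
      hpar.add_one.neg_one_pow]
    linarith

lemma altRank_left (hx : NoncrossingChords k x) : altRank k x (x 0) = 0 :=
  sum_eq_zero fun j hj => by
    rw [if_neg (hx.lt_left (j + 1) (by omega) (mem_range.1 hj)).not_gt, mul_zero]

lemma altRank_one (hx : NoncrossingChords k x) (hk : Odd k) : altRank k x (x 1) = 0 := by
  obtain ⟨n, rfl⟩ := hk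
  have hsum := hx.sum_crossSign_sub (c := 0) (r := 0) rfl (by omega)
  have h0 := hx.altRank_left
  simp only [add_zero, zero_add, sum_sub_distrib] at hsum
  rw [altRank_eq_sum_even_chords] at h0 ⊢
  rw [if_pos (hx.lt_left 1 le_rfl (by omega))]
  rw [if_neg (lt_irrefl _)] at h0
  linarith

theorem altRank_vertex (hx : NoncrossingChords k x) (hk : Odd k) {m : ℕ} (hm : 1 ≤ m)
    (hmk : m ≤ k) : altRank k x (x m) = if Even m then 1 else 0 := by
  induction m, hm using Nat.le_induction with
  | base => simpa using hx.altRank_one hk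
  | succ c hc ih =>
    rw [hx.altRank_succ hk hc hmk, ih (by omega)]
    rcases Nat.even_or_odd c with h | h
    · simp [h, Nat.not_even_iff_odd.2 h.add_one, h.add_one.neg_one_pow]
    · simp [h.add_one, Nat.not_even_iff_odd.2 h, h.add_one.neg_one_pow]

theorem altRank_of_forall_ne (hx : NoncrossingChords k x) (hk : Odd k) {t : α}
    (ht : ∀ j, 1 ≤ j → j ≤ k → x j ≠ t) : altRank k x t = 0 ∨ altRank k x t = 1 := by
  set above := (Icc 1 k).filter (fun j => t < x j)
  rcases above.eq_empty_or_nonempty with h | h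
  · right
    obtain ⟨n, rfl⟩ := hk
    calc altRank (2 * n + 1) x t = ∑ j ∈ range (2 * n + 1), (-1) ^ j * (fun _ => (1 : ℤ)) (j + 1) :=
          sum_congr rfl fun j hj => by
            have hj := mem_range.1 hj
            have hlt : ¬ t < x (j + 1) := fun hlt =>
              (eq_empty_iff_forall_notMem.1 h) (j + 1)
                (mem_filter.2 ⟨mem_Icc.2 ⟨by omega, by omega⟩, hlt⟩)
            rw [if_pos (lt_of_le_of_ne (not_lt.1 hlt) (ht _ (by omega) (by omega)))]
      _ = 1 := (sum_range_alternating_eq_odd_pairs (fun _ => (1 : ℤ)) n).trans (by simp)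
  · obtain ⟨m, hm, hmin⟩ := above.exists_min_image x h
    obtain ⟨⟨hm1, hmk⟩, htm⟩ := by simpa [above] using hm
    suffices altRank k x t = altRank k x (x m) by
      rw [this, hx.altRank_vertex hk hm1 hmk]; split_ifs <;> simp
    refine sum_congr rfl fun j hj => ?_
    have hj := mem_range.1 hj
    have : x (j + 1) < t ↔ x (j + 1) < x m := by
      refine ⟨fun h => h.trans htm, fun h => lt_of_le_of_ne (not_lt.1 fun hlt => ?_)
        (ht _ (by omega) (by omega))⟩
      exact (hmin (j + 1) (mem_filter.2 ⟨mem_Icc.2 ⟨by omega, by omega⟩, hlt⟩)).not_gt h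
    simp only [this]

end NoncrossingChords

end Chords

lemma esgn_add_neg_of_ne {a b : EReal} (h : a ≠ b) : esgn (a + -b) = if b < a then 1 else -1 := by
  induction a using EReal.rec <;> induction b using EReal.rec <;> simp_all [esgn]
  rename_i a b
  simp only [← EReal.coe_neg, ← EReal.coe_add, ← EReal.coe_zero, EReal.coe_lt_coe_iff]
  rcases lt_or_gt_of_ne h with h | h <;> simp [h, h.not_gt]

lemma extY_of_mem {k j : ℕ} (Y : ℕ → ℝ) (h₁ : 1 ≤ j) (h₂ : j ≤ k) : extY k Y j = Y j :=
  if_pos ⟨h₁, h₂⟩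

lemma injOn_Icc_of_forall_lt_ne {β : Type*} {k : ℕ} {Y : ℕ → β}
    (hdist : ∀ j j' : ℕ, 1 ≤ j → j < j' → j' ≤ k → Y j ≠ Y j') : Set.InjOn Y (Set.Icc 1 k) := by
  intro i ⟨hi₁, hi₂⟩ j ⟨hj₁, hj₂⟩ h
  by_contra hij
  rcases lt_or_gt_of_ne hij with hij | hij
  · exact hdist i j hi₁ hij hj₂ h
  · exact hdist j i hj₁ hij hi₂ h.symm

lemma noncrossingChords_extY {k : ℕ} {Y : ℕ → ℝ} (hk : Odd k) (hY : Set.InjOn Y (Set.Icc 1 k))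
    (hnc : ∀ p q : ℕ, p < q → q ≤ k → p % 2 = q % 2 →
      NCS2E (extY k Y p) (extY k Y (p + 1)) (-(extY k Y q)) (-(extY k Y (q + 1)))) :
    NoncrossingChords k (extY k Y) := by
  have hinj : Set.InjOn (extY k Y) (Set.Icc 1 k) := by
    intro i hi j hj h
    rw [extY_of_mem Y hi.1 hi.2, extY_of_mem Y hj.1 hj.2, EReal.coe_eq_coe_iff] at h
    exact hY hi hj h
  have hbot : ∀ j, 1 ≤ j → j ≤ k → ∀ i, ¬ (1 ≤ i ∧ i ≤ k) → extY k Y i < extY k Y j :=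
    fun j hj₁ hj₂ i hi => by
      rw [extY_of_mem Y hj₁ hj₂, extY, if_neg hi]; exact EReal.bot_lt_coe _
  have h₀ : ∀ j, 1 ≤ j → j ≤ k → extY k Y 0 < extY k Y j :=
    fun j hj₁ hj₂ => hbot j hj₁ hj₂ 0 (by omega)
  have h₁ : ∀ j, 1 ≤ j → j ≤ k → extY k Y (k + 1) < extY k Y j :=
    fun j hj₁ hj₂ => hbot j hj₁ hj₂ (k + 1) (by omega)
  refine ⟨hinj, h₀, h₁, fun p q hpq hq hpar => ?_⟩
  obtain ⟨n, rfl⟩ := hk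
  have hne {i j : ℕ} (hi : i ≤ 2 * n + 1 + 1) (hj : j ≤ 2 * n + 1 + 1) (hij : i ≠ j)
      (hvert : 1 ≤ i ∧ i ≤ 2 * n + 1 ∨ 1 ≤ j ∧ j ≤ 2 * n + 1) : extY _ Y i ≠ extY _ Y j :=
    ne_of_injOn_of_lt hinj h₀ h₁ hi hj hij hvert
  have h := (hnc p q hpq hq hpar).2
  rw [esgn_add_neg_of_ne (hne (by omega) (by omega) (by omega) (by omega)),
    esgn_add_neg_of_ne (hne (by omega) (by omega) (by omega) (by omega)),
    esgn_add_neg_of_ne (hne (by omega) (by omega) (by omega) (by omega)),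
    esgn_add_neg_of_ne (hne (by omega) (by omega) (by omega) (by omega))] at h
  exact nonCrossing_of_sign_sum (hne (by omega) (by omega) (by omega) (by omega))
    (hne (by omega) (by omega) (by omega) (by omega))
    (hne (by omega) (by omega) (by omega) (by omega))
    (hne (by omega) (by omega) (by omega) (by omega)) h

lemma altRank_extY (k : ℕ) (Y : ℕ → ℝ) (s : ℝ) : altRank k (extY k Y) (s : EReal) = altRank k Y s :=
  sum_congr rfl fun j hj => by
    simp only [extY_of_mem Y (by omega : 1 ≤ j + 1) (mem_range.1 hj), EReal.coe_lt_coe_iff]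

lemma wind_eq {k : ℕ} (hk : Odd k) (Y : ℕ → ℝ) (s : ℝ) :
    wind k Y s = 1 - altRank k Y s -
      1 / 2 * ∑ j ∈ range k, (-1) ^ j * if Y (j + 1) = s then 1 else 0 := by
  obtain ⟨n, rfl⟩ := hk
  have hsign (y : ℝ) : Real.sign (y - s) =
      1 - 2 * (if y < s then 1 else 0) - if y = s then 1 else 0 := by
    rcases lt_trichotomy y s with h | rfl | h
    · simp [h, h.ne, Real.sign_of_neg (sub_neg.2 h)]; norm_num
    · simp
    · simp [h.not_gt, h.ne', Real.sign_of_pos (sub_pos.2 h)]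
  have halt := sum_range_alternating_eq_odd_pairs (fun _ => (1 : ℝ)) n
  simp only [sub_self, sum_const_zero, add_zero, mul_one] at halt
  simp only [wind, altRank, hsign, mul_sub, sum_sub_distrib, mul_one, halt,
    mul_left_comm _ (2 : ℝ), ← mul_sum]
  push_cast
  ring

lemma wind_vertex {k : ℕ} (hk : Odd k) {Y : ℕ → ℝ} (hY : Set.InjOn Y (Set.Icc 1 k)) {m : ℕ}
    (hm₁ : 1 ≤ m) (hmk : m ≤ k) (hrank : altRank k Y (Y m) = if Even m then 1 else 0) :
    wind k Y (Y m) = 1 / 2 := by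
  have hsum : ∑ j ∈ range k, (-1 : ℝ) ^ j * (if Y (j + 1) = Y m then 1 else 0) =
      (-1) ^ (m - 1) := by
    rw [sum_eq_single_of_mem (m - 1) (mem_range.2 (by omega)), Nat.sub_add_cancel hm₁,
      if_pos rfl, mul_one]
    intro j hj hjm
    rw [if_neg fun h => hjm (by have := hY ⟨by omega, mem_range.1 hj⟩ ⟨hm₁, hmk⟩ h; omega),
      mul_zero]
  rw [wind_eq hk, hrank, hsum]
  rcases Nat.even_or_odd m with h | h
  · obtain ⟨j, rfl⟩ := h
    rw [if_pos ⟨j, rfl⟩, (show Odd (j + j - 1) from ⟨j - 1, by omega⟩).neg_one_pow]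
    norm_num
  · obtain ⟨j, rfl⟩ := h
    rw [if_neg (Nat.not_even_iff_odd.2 ⟨j, rfl⟩), Nat.add_sub_cancel, Even.neg_one_pow ⟨j, by ring⟩]
    norm_num

lemma wind_of_forall_ne {k : ℕ} (hk : Odd k) {Y : ℕ → ℝ} {t : ℝ}
    (ht : ∀ j, 1 ≤ j → j ≤ k → t ≠ Y j) (hrank : altRank k Y t = 0 ∨ altRank k Y t = 1) :
    wind k Y t = 0 ∨ wind k Y t = 1 := by
  have hsum : ∑ j ∈ range k, (-1 : ℝ) ^ j * (if Y (j + 1) = t then 1 else 0) = 0 :=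
    sum_eq_zero fun j hj => by
      rw [if_neg (ht (j + 1) (by omega) (mem_range.1 hj)).symm, mul_zero]
  rw [wind_eq hk, hsum]
  rcases hrank with h | h <;> simp [h]

/-- Combinatorial Jordan curve theorem: under the non-crossing hypothesis (i) of the
combinatorial conjecture, each winding number `Wᵢ` equals `½` at each `y_{i,j}` and takes
only the values `0` and `1` away from the `y_{i,j}`. -/
theorem stmt12 (k : Fin 3 → ℕ) (hk : ∀ i, Odd (k i)) (Y : Fin 3 → ℕ → ℝ)
    (hdist : ∀ i, ∀ j j' : ℕ, 1 ≤ j → j < j' → j' ≤ k i → Y i j ≠ Y i j')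
    (hnc : ∀ i, ∀ p q : ℕ, p < q → q ≤ k i → p % 2 = q % 2 →
      NCS2E (extY (k i) (Y i) p) (extY (k i) (Y i) (p + 1))
        (-(extY (k i) (Y i) q)) (-(extY (k i) (Y i) (q + 1)))) :
    ∀ i, (∀ j : ℕ, 1 ≤ j → j ≤ k i → wind (k i) (Y i) (Y i j) = 1 / 2) ∧
      (∀ t : ℝ, (∀ j : ℕ, 1 ≤ j → j ≤ k i → t ≠ Y i j) →
        wind (k i) (Y i) t = 0 ∨ wind (k i) (Y i) t = 1) := by
  intro i
  have hY := injOn_Icc_of_forall_lt_ne (hdist i)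
  have hx := noncrossingChords_extY (hk i) hY (hnc i)
  refine ⟨fun j hj₁ hj₂ => wind_vertex (hk i) hY hj₁ hj₂ ?_,
    fun t ht => wind_of_forall_ne (hk i) ht ?_⟩
  · have h := hx.altRank_vertex (hk i) hj₁ hj₂
    rwa [extY_of_mem _ hj₁ hj₂, altRank_extY] at h
  · have h := hx.altRank_of_forall_ne (hk i) (t := (t : EReal)) fun j hj₁ hj₂ => by
      rw [extY_of_mem _ hj₁ hj₂]
      exact_mod_cast (ht j hj₁ hj₂).symm
    rwa [altRank_extY] at h
end

section
/- Suppose 0 < a < b < c and x, y, z ∈ ℝ are such that the pairs {x, x+a}, {y, y+b}, {z, z+c} have non-crossing sums, and that the pair {y, y+b} has no influence on the sign of the triple sums, i.e. sgn(x′ + y + z′) = sgn(x′ + y + b + z′) for all x′ ∈ {x, x+a} and z′ ∈ {z, z+c}. Then the pair {x, x+a} also has no influence: sgn(x + y′ + z′) = sgn(x + a + y′ + z′) for all y′ ∈ {y, y+b} and z′ ∈ {z, z+c}. -/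
lemma sign_mid17 {p m q : ℝ} (hpm : p < m) (hmq : m < q)
    (hp : p ≠ 0) (hq : q ≠ 0) (hs : Real.sign p = Real.sign q) :
    Real.sign m = Real.sign p := by
  rcases lt_or_gt_of_ne hp with h | h
  · rcases lt_or_gt_of_ne hq with h' | h'
    · rw [Real.sign_of_neg (hmq.trans h'), Real.sign_of_neg h]
    · rw [Real.sign_of_neg h, Real.sign_of_pos h'] at hs; norm_num at hs
  · rw [Real.sign_of_pos (h.trans hpm), Real.sign_of_pos h]

/-- Monotonicity of influence: for `0 < a < b < c` with non-crossing sums, if the middle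
pair `{y, y+b}` has no influence on the signs of the triple sums, then neither does the
smallest pair `{x, x+a}`. -/
theorem stmt17 (a b c x y z : ℝ) (ha : 0 < a) (hab : a < b) (hbc : b < c)
    (hnc : NCS3 x (x + a) y (y + b) z (z + c))
    (hmid : ∀ u ∈ ({x, x + a} : Set ℝ), ∀ w ∈ ({z, z + c} : Set ℝ),
      Real.sign (u + y + w) = Real.sign (u + y + b + w)) :
    ∀ v ∈ ({y, y + b} : Set ℝ), ∀ w ∈ ({z, z + c} : Set ℝ),
      Real.sign (x + v + w) = Real.sign (x + a + v + w) := by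
  obtain ⟨hnz, -⟩ := hnc
  intro v hv w hw
  have hx : x ∈ ({x, x + a} : Set ℝ) := Or.inl rfl
  have hxa : x + a ∈ ({x, x + a} : Set ℝ) := Or.inr rfl
  have hy : y ∈ ({y, y + b} : Set ℝ) := Or.inl rfl
  have hyb : y + b ∈ ({y, y + b} : Set ℝ) := Or.inr rfl
  have h1 : Real.sign (x + y + w) = Real.sign (x + y + b + w) := hmid x hx w hw
  have h2 : Real.sign (x + a + y + w) = Real.sign (x + a + y + b + w) :=
    hmid (x + a) hxa w hw
  have np : x + y + w ≠ 0 := hnz x hx y hy w hw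
  have nq : x + y + b + w ≠ 0 := fun h0 => hnz x hx (y + b) hyb w hw (by linarith)
  have hm : Real.sign (x + a + y + w) = Real.sign (x + y + w) :=
    sign_mid17 (by linarith) (by linarith) np nq h1
  rcases hv with rfl | hv
  · exact hm.symm
  · simp only [Set.mem_singleton_iff] at hv
    subst hv
    have e1 : x + (y + b) + w = x + y + b + w := by ring
    have e2 : x + a + (y + b) + w = x + a + y + b + w := by ring
    rw [e1, e2, ← h1, ← h2, hm]
end

section
/- Let L > 0 and let f₂, f₄ : ℝ → ℝ be (1−ε)-Lipschitz and L-periodic for some ε > 0, and let x₁, y₁ : ℝ → ℝ be continuous with x₁(t+L) = x₁(t) + L and y₁ L-periodic. Then there exist unique continuous L-periodic functions a, b : ℝ → ℝ such that a(t) = f₄(x₁(t) − b(t)) − y₁(t) and b(t) = f₂(x₁(t) + a(t)) − y₁(t) for all t ∈ ℝ. -/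
open Function Filter

/-- For `L`-periodic `(1−ε)`-Lipschitz functions `f₂, f₄` and continuous `x₁, y₁` with
`x₁(t+L) = x₁(t) + L` and `y₁` `L`-periodic, there exist unique continuous `L`-periodic
functions `a, b` with `a(t) = f₄(x₁(t) − b(t)) − y₁(t)` and
`b(t) = f₂(x₁(t) + a(t)) − y₁(t)` for all `t`. -/
theorem stmt19 (L ε : ℝ) (hL : 0 < L) (hε : 0 < ε) (f2 f4 : ℝ → ℝ)
    (hf2 : ∀ s t : ℝ, |f2 s - f2 t| ≤ (1 - ε) * |s - t|)
    (hf4 : ∀ s t : ℝ, |f4 s - f4 t| ≤ (1 - ε) * |s - t|)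
    (hf2p : ∀ t : ℝ, f2 (t + L) = f2 t)
    (hf4p : ∀ t : ℝ, f4 (t + L) = f4 t)
    (x1 y1 : ℝ → ℝ) (hx1c : Continuous x1) (hy1c : Continuous y1)
    (hx1 : ∀ t : ℝ, x1 (t + L) = x1 t + L)
    (hy1 : ∀ t : ℝ, y1 (t + L) = y1 t) :
    ∃! ab : (ℝ → ℝ) × (ℝ → ℝ),
      Continuous ab.1 ∧ Continuous ab.2 ∧
      (∀ t : ℝ, ab.1 (t + L) = ab.1 t) ∧ (∀ t : ℝ, ab.2 (t + L) = ab.2 t) ∧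
      ∀ t : ℝ, ab.1 t = f4 (x1 t - ab.2 t) - y1 t ∧ ab.2 t = f2 (x1 t + ab.1 t) - y1 t := by
  set K : NNReal := Real.toNNReal (1 - ε) with hK
  have hKlt : K < 1 := by
    rw [hK]
    rw [← Real.toNNReal_one]
    rcases le_or_gt (1 - ε) 0 with h | h
    · rw [Real.toNNReal_of_nonpos h]; simp
    · exact (Real.toNNReal_lt_toNNReal_iff one_pos).2 (by linarith)
  have hKe : (1 - ε : ℝ) ≤ (K : ℝ) := Real.le_coe_toNNReal _
  have hf2L : LipschitzWith K f2 := by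
    apply LipschitzWith.of_dist_le_mul
    intro s t
    rw [Real.dist_eq, Real.dist_eq]
    exact (hf2 s t).trans (mul_le_mul_of_nonneg_right hKe (abs_nonneg _))
  have hf4L : LipschitzWith K f4 := by
    apply LipschitzWith.of_dist_le_mul
    intro s t
    rw [Real.dist_eq, Real.dist_eq]
    exact (hf4 s t).trans (mul_le_mul_of_nonneg_right hKe (abs_nonneg _))
  set Φ : ℝ → ℝ × ℝ → ℝ × ℝ :=
    fun t p => (f4 (x1 t - p.2) - y1 t, f2 (x1 t + p.1) - y1 t) with hΦdef
  have hΦ : ∀ t, ContractingWith K (Φ t) := by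
    intro t
    refine ⟨hKlt, LipschitzWith.of_dist_le_mul fun p q => ?_⟩
    rw [Prod.dist_eq]
    apply max_le
    · calc dist (Φ t p).1 (Φ t q).1 = dist (f4 (x1 t - p.2)) (f4 (x1 t - q.2)) := by
            simp [hΦdef, Real.dist_eq]
        _ ≤ K * dist (x1 t - p.2) (x1 t - q.2) := hf4L.dist_le_mul _ _
        _ = K * dist p.2 q.2 := by
            rw [Real.dist_eq, Real.dist_eq,
              show x1 t - p.2 - (x1 t - q.2) = -(p.2 - q.2) by ring, abs_neg]
        _ ≤ K * dist p q := by
            rw [Prod.dist_eq]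
            exact mul_le_mul_of_nonneg_left (le_max_right _ _) K.coe_nonneg
    · calc dist (Φ t p).2 (Φ t q).2 = dist (f2 (x1 t + p.1)) (f2 (x1 t + q.1)) := by
            simp [hΦdef, Real.dist_eq]
        _ ≤ K * dist (x1 t + p.1) (x1 t + q.1) := hf2L.dist_le_mul _ _
        _ = K * dist p.1 q.1 := by
            rw [Real.dist_eq, Real.dist_eq,
              show x1 t + p.1 - (x1 t + q.1) = p.1 - q.1 by ring]
        _ ≤ K * dist p q := by
            rw [Prod.dist_eq]
            exact mul_le_mul_of_nonneg_left (le_max_left _ _) K.coe_nonneg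
  set P : ℝ → ℝ × ℝ := fun t => (hΦ t).fixedPoint (Φ t) with hPdef
  have hPfix : ∀ t, Φ t (P t) = P t := fun t => (hΦ t).fixedPoint_isFixedPt
  have hΦper : ∀ t, Φ (t + L) = Φ t := by
    intro t
    funext p
    have h1 : x1 (t + L) - p.2 = (x1 t - p.2) + L := by rw [hx1]; ring
    have h2 : x1 (t + L) + p.1 = (x1 t + p.1) + L := by rw [hx1]; ring
    simp [hΦdef, h1, h2, hf4p, hf2p, hy1]
  have hPper : ∀ t, P (t + L) = P t := by
    intro t
    have : IsFixedPt (Φ (t + L)) (P t) := by rw [hΦper]; exact hPfix t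
    exact ((hΦ (t + L)).fixedPoint_unique this).symm
  have hΦcont : ∀ p : ℝ × ℝ, Continuous fun t => Φ t p := by
    intro p
    exact ((hf4L.continuous.comp (hx1c.sub continuous_const)).sub hy1c).prodMk
      ((hf2L.continuous.comp (hx1c.add continuous_const)).sub hy1c)
  have hPcont : Continuous P := by
    rw [continuous_iff_continuousAt]
    intro s
    rw [ContinuousAt, tendsto_iff_dist_tendsto_zero]
    have hbound : ∀ t, dist (P t) (P s) ≤ dist (P s) (Φ t (P s)) / (1 - K) := by
      intro t
      rw [dist_comm]
      exact (hΦ t).dist_le_of_fixedPoint (P s) ((hΦ t).fixedPoint_isFixedPt)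
    have hg : Tendsto (fun t => dist (P s) (Φ t (P s)) / (1 - K)) (nhds s) (nhds 0) := by
      have hc : Continuous fun t => dist (P s) (Φ t (P s)) / (1 - K) :=
        (continuous_const.dist (hΦcont (P s))).div_const _
      have h0 : dist (P s) (Φ s (P s)) / (1 - (K : ℝ)) = 0 := by
        rw [hPfix s]; simp
      have := hc.continuousAt (x := s)
      rw [ContinuousAt] at this
      rwa [h0] at this
    exact squeeze_zero (fun t => dist_nonneg) hbound hg
  refine ⟨(fun t => (P t).1, fun t => (P t).2), ⟨(continuous_fst.comp hPcont),
    (continuous_snd.comp hPcont),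
    fun t => by exact congrArg Prod.fst (hPper t),
    fun t => by exact congrArg Prod.snd (hPper t),
    fun t => ⟨by exact (congrArg Prod.fst (hPfix t)).symm,
      by exact (congrArg Prod.snd (hPfix t)).symm⟩⟩, ?_⟩
  rintro ⟨a, b⟩ ⟨-, -, -, -, hab⟩
  have : ∀ t, (a t, b t) = P t := by
    intro t
    refine (hΦ t).fixedPoint_unique ?_
    have h := hab t
    show Φ t (a t, b t) = (a t, b t)
    simp only [hΦdef]
    exact Prod.ext h.1.symm h.2.symm
  refine Prod.ext (funext fun t => congrArg Prod.fst (this t))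
    (funext fun t => congrArg Prod.snd (this t))
end
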